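/- Let l be a finite-dimensional abelian real Lie algebra and (a, ω_a) a symplectic Lie algebra. Given linear maps γ : l → Hom(a, l*), ε ∈ Λ²l* ⊗ l*, ξ : l → gl(a), define on the vector space d = l* ⊕ a ⊕ l a skew bracket by: [l*, d] = 0; [A₁,A₂] = β(A₁,A₂) + [A₁,A₂]_a; [L,A] = γ(L)A + ξ(L)A; [L₁,L₂] = ε(L₁,L₂) + α(L₁,L₂); where β(A₁,A₂) = −ω_a(ξ(·)A₁,A₂) − ω_a(A₁,ξ(·)A₂) and α(L₁,L₂) = (γ(L₁))*L₂ − (γ(L₂))*L₁ (with (γ(L))* : l → a the ω_a-dual of γ(L)). Also define ω(Z₁+A₁+L₁, Z₂+A₂+L₂) = Z₁(L₂) + ω_a(A₁,A₂) − Z₂(L₁). Then (d, [·,·], ω) is a symplectic Lie algebra if and only if: (1) each ξ(L) is a derivation of a, dξ + ½[ξ∧ξ] = ad_a ∘ α and d_ξ α = 0 (i.e. (ξ, α) is a factor system); (2) β(ξ(L)A₁, A₂) + β(A₁, ξ(L)A₂) = γ(L)[A₁,A₂]_a for all L, A₁, A₂; (3) d_{ξ̂} γ + β₀ ∘ α =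 0; (4) ev(γ ∧ α) = 0; (5) ε(L₁,L₂)L₃ + ε(L₂,L₃)L₁ + ε(L₃,L₁)L₂ = 0 for all L₁,L₂,L₃ ∈ l. -/
import Mathlib


namespace Stmt6

set_option maxHeartbeats 2000000

variable {l a : Type*} [AddCommGroup l] [Module ℝ l] [LieRing a] [LieAlgebra ℝ a]

/-- The underlying vector space `l* ⊕ a ⊕ l` of the standard model. -/
abbrev Dm (l a : Type*) [AddCommGroup l] [Module ℝ l] [AddCommGroup a] [Module ℝ a] :=
  (Module.Dual ℝ l) × a × l

/-- `β(A₁, A₂) = L ↦ −ω_a(ξ(L)A₁, A₂) − ω_a(A₁, ξ(L)A₂)` as an element of `l*`. -/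
def betaF (ωa : a →ₗ[ℝ] a →ₗ[ℝ] ℝ) (ξ : l →ₗ[ℝ] (a →ₗ[ℝ] a)) (A₁ A₂ : a) :
    Module.Dual ℝ l :=
  - ((ωa.flip A₂) ∘ₗ (ξ.flip A₁)) - ((ωa A₁) ∘ₗ (ξ.flip A₂))

/-- The bracket of the standard model `d_{γ,ε,ξ}(l,a)` on `l* ⊕ a ⊕ l`. -/
def br (ωa : a →ₗ[ℝ] a →ₗ[ℝ] ℝ) (γ : l →ₗ[ℝ] (a →ₗ[ℝ] Module.Dual ℝ l))
    (ε : l →ₗ[ℝ] (l →ₗ[ℝ] Module.Dual ℝ l)) (ξ : l →ₗ[ℝ] (a →ₗ[ℝ] a))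
    (αf : l → l → a) : Dm l a → Dm l a → Dm l a :=
  fun x y =>
    (betaF ωa ξ x.2.1 y.2.1 + γ x.2.2 y.2.1 - γ y.2.2 x.2.1 + ε x.2.2 y.2.2,
     ⁅x.2.1, y.2.1⁆ + ξ x.2.2 y.2.1 - ξ y.2.2 x.2.1 + αf x.2.2 y.2.2,
     0)

/-- The symplectic form of the standard model. -/
def Om (ωa : a →ₗ[ℝ] a →ₗ[ℝ] ℝ) : Dm l a → Dm l a → ℝ :=
  fun x y => x.1 y.2.2 + ωa x.2.1 y.2.1 - y.1 x.2.2

/-- The five conditions defining the set `Z²(l, a, ω_a)` of quadratic cocycles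
(with `αf` the `ω_a`-dual datum `α` of `γ`). -/
def IsQuadCocycle (ωa : a →ₗ[ℝ] a →ₗ[ℝ] ℝ) (γ : l →ₗ[ℝ] (a →ₗ[ℝ] Module.Dual ℝ l))
    (ε : l →ₗ[ℝ] (l →ₗ[ℝ] Module.Dual ℝ l)) (ξ : l →ₗ[ℝ] (a →ₗ[ℝ] a))
    (αf : l → l → a) : Prop :=
  -- (1) (ξ, α) is a factor system :
  ((∀ (L : l) (X Y : a), ξ L ⁅X, Y⁆ = ⁅ξ L X, Y⁆ + ⁅X, ξ L Y⁆) ∧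
    (∀ (L₁ L₂ : l) (A : a), ξ L₁ (ξ L₂ A) - ξ L₂ (ξ L₁ A) = ⁅αf L₁ L₂, A⁆) ∧
    (∀ L₁ L₂ L₃ : l, ξ L₁ (αf L₂ L₃) - ξ L₂ (αf L₁ L₃) + ξ L₃ (αf L₁ L₂) = 0)) ∧
  -- (2) :
  (∀ (L : l) (A₁ A₂ : a),
      betaF ωa ξ (ξ L A₁) A₂ + betaF ωa ξ A₁ (ξ L A₂) = γ L ⁅A₁, A₂⁆) ∧
  -- (3) d_{ξ̂}γ + β₀ ∘ α = 0 :
  (∀ (L₁ L₂ : l) (A : a),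
      γ L₂ (ξ L₁ A) - γ L₁ (ξ L₂ A) + betaF ωa ξ (αf L₁ L₂) A = 0) ∧
  -- (4) ev(γ ∧ α) = 0 :
  (∀ L₁ L₂ L₃ : l,
      γ L₁ (αf L₂ L₃) - γ L₂ (αf L₁ L₃) + γ L₃ (αf L₁ L₂) = 0) ∧
  -- (5) :
  (∀ L₁ L₂ L₃ : l, ε L₁ L₂ L₃ + ε L₂ L₃ L₁ + ε L₃ L₁ L₂ = 0)

/-- the standard model `d = l* ⊕ a ⊕ l` with the bracket `br` and the
form `Om` is a symplectic Lie algebra (Jacobi identity and closedness of `Om`)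
if and only if `(γ, ε, ξ)` is a quadratic cocycle. -/
theorem standard_model_symplectic_iff_cocycle
    [FiniteDimensional ℝ l] [FiniteDimensional ℝ a]
    (ωa : a →ₗ[ℝ] a →ₗ[ℝ] ℝ)
    (hskew : ∀ X Y : a, ωa X Y = - ωa Y X)
    (hnd : ∀ X : a, (∀ Y : a, ωa X Y = 0) → X = 0)
    (hclosed : ∀ X Y Z : a, ωa ⁅X, Y⁆ Z - ωa ⁅X, Z⁆ Y + ωa ⁅Y, Z⁆ X = 0)
    (γ : l →ₗ[ℝ] (a →ₗ[ℝ] Module.Dual ℝ l))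
    (ε : l →ₗ[ℝ] (l →ₗ[ℝ] Module.Dual ℝ l)) (hε : ∀ L : l, ε L L = 0)
    (ξ : l →ₗ[ℝ] (a →ₗ[ℝ] a))
    (αf : l → l → a)
    (hα : ∀ (L₁ L₂ : l) (A : a), γ L₁ A L₂ - γ L₂ A L₁ = ωa (αf L₁ L₂) A) :
    ((∀ x y z : Dm l a,
        br ωa γ ε ξ αf (br ωa γ ε ξ αf x y) z +
          br ωa γ ε ξ αf (br ωa γ ε ξ αf y z) x +
          br ωa γ ε ξ αf (br ωa γ ε ξ αf z x) y = 0) ∧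
      (∀ x y z : Dm l a,
        Om ωa (br ωa γ ε ξ αf x y) z - Om ωa (br ωa γ ε ξ αf x z) y +
          Om ωa (br ωa γ ε ξ αf y z) x = 0))
    ↔ IsQuadCocycle ωa γ ε ξ αf := by
  have hbeta : ∀ (X Y : a) (L : l), betaF ωa ξ X Y L = -(ωa (ξ L X) Y) - ωa X (ξ L Y) :=
    fun X Y L => rfl
  have hα0l : ∀ L : l, αf 0 L = 0 := by
    intro L; apply hnd; intro Y
    have h := (hα 0 L Y).symm
    simpa using h
  have hαl0 : ∀ L : l, αf L 0 = 0 := by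
    intro L; apply hnd; intro Y
    have h := (hα L 0 Y).symm
    simpa using h
  have hαskew : ∀ L₁ L₂ : l, αf L₂ L₁ = - αf L₁ L₂ := by
    intro L₁ L₂
    have h : αf L₂ L₁ + αf L₁ L₂ = 0 := by
      apply hnd; intro Y
      have h1 := hα L₁ L₂ Y
      have h2 := hα L₂ L₁ Y
      simp only [map_add, LinearMap.add_apply]
      linarith
    exact eq_neg_of_add_eq_zero_left h
  have hεskew : ∀ L₁ L₂ : l, ε L₂ L₁ = - ε L₁ L₂ := by
    intro L₁ L₂
    have h := hε (L₁ + L₂)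
    simp only [map_add, LinearMap.add_apply, hε] at h
    ext L
    have hh := LinearMap.congr_fun h L
    simp only [LinearMap.add_apply, LinearMap.zero_apply, LinearMap.neg_apply] at hh ⊢
    linarith
  have hβskew : ∀ X Y : a, betaF ωa ξ Y X = - betaF ωa ξ X Y := by
    intro X Y; ext L
    simp only [hbeta, LinearMap.neg_apply]
    linarith [hskew (ξ L Y) X, hskew Y (ξ L X)]
  have hβ0r : ∀ X : a, betaF ωa ξ X 0 = 0 := by
    intro X; ext L; simp [hbeta]
  have hβ0l : ∀ X : a, betaF ωa ξ 0 X = 0 := by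
    intro X; ext L; simp [hbeta]
  have hβneg : ∀ X Y : a, betaF ωa ξ (-X) Y = - betaF ωa ξ X Y := by
    intro X Y; ext L
    simp [hbeta]
    ring
  constructor
  · rintro ⟨hJ, hω⟩
    have j2 : ∀ x y z : Dm l a,
        (br ωa γ ε ξ αf (br ωa γ ε ξ αf x y) z).2.1 +
          (br ωa γ ε ξ αf (br ωa γ ε ξ αf y z) x).2.1 +
          (br ωa γ ε ξ αf (br ωa γ ε ξ αf z x) y).2.1 = 0 :=
      fun x y z => congrArg (fun p : Dm l a => p.2.1) (hJ x y z)
    have j1 : ∀ x y z : Dm l a,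
        (br ωa γ ε ξ αf (br ωa γ ε ξ αf x y) z).1 +
          (br ωa γ ε ξ αf (br ωa γ ε ξ αf y z) x).1 +
          (br ωa γ ε ξ αf (br ωa γ ε ξ αf z x) y).1 = 0 :=
      fun x y z => congrArg (fun p : Dm l a => p.1) (hJ x y z)
    have c1a : ∀ (L : l) (X Y : a), ξ L ⁅X, Y⁆ = ⁅ξ L X, Y⁆ + ⁅X, ξ L Y⁆ := by
      intro L X Y
      have h := j2 (0, X, 0) (0, Y, 0) (0, 0, L)
      simp only [br, betaF] at h
      simp [hα0l, hαl0] at h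
      linear_combination (norm := module) -h
    have c1b : ∀ (L₁ L₂ : l) (A : a), ξ L₁ (ξ L₂ A) - ξ L₂ (ξ L₁ A) = ⁅αf L₁ L₂, A⁆ := by
      intro L₁ L₂ A
      have h := j2 (0, 0, L₁) (0, 0, L₂) (0, A, 0)
      simp [br, betaF, hα0l, hαl0] at h
      linear_combination (norm := module) -h
    have c1c : ∀ L₁ L₂ L₃ : l, ξ L₁ (αf L₂ L₃) - ξ L₂ (αf L₁ L₃) + ξ L₃ (αf L₁ L₂) = 0 := by
      intro L₁ L₂ L₃
      have h := j2 (0, 0, L₁) (0, 0, L₂) (0, 0, L₃)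
      simp [br, betaF, hα0l, hαl0] at h
      have e : ξ L₂ (αf L₃ L₁) = - ξ L₂ (αf L₁ L₃) := by rw [hαskew L₁ L₃]; simp
      linear_combination (norm := module) -h - e
    have c2 : ∀ (L : l) (A₁ A₂ : a),
        betaF ωa ξ (ξ L A₁) A₂ + betaF ωa ξ A₁ (ξ L A₂) = γ L ⁅A₁, A₂⁆ := by
      intro L A₁ A₂
      have h := j1 (0, A₁, 0) (0, A₂, 0) (0, 0, L)
      simp [br, hα0l, hαl0, hβ0r, hβ0l, hβneg] at h
      linear_combination (norm := module) h + hβskew (ξ L A₂) A₁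
    have c3 : ∀ (L₁ L₂ : l) (A : a),
        γ L₂ (ξ L₁ A) - γ L₁ (ξ L₂ A) + betaF ωa ξ (αf L₁ L₂) A = 0 := by
      intro L₁ L₂ A
      have h := j1 (0, 0, L₁) (0, 0, L₂) (0, A, 0)
      simp [br, hα0l, hαl0, hβ0r, hβ0l, hβneg] at h
      linear_combination (norm := module) h
    have c4 : ∀ L₁ L₂ L₃ : l,
        γ L₁ (αf L₂ L₃) - γ L₂ (αf L₁ L₃) + γ L₃ (αf L₁ L₂) = 0 := by
      intro L₁ L₂ L₃
      have h := j1 (0, 0, L₁) (0, 0, L₂) (0, 0, L₃)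
      simp [br, hα0l, hαl0, hβ0r, hβ0l, hβneg] at h
      have e : γ L₂ (αf L₃ L₁) = - γ L₂ (αf L₁ L₃) := by rw [hαskew L₁ L₃]; simp
      linear_combination (norm := module) -h - e
    have c5 : ∀ L₁ L₂ L₃ : l, ε L₁ L₂ L₃ + ε L₂ L₃ L₁ + ε L₃ L₁ L₂ = 0 := by
      intro L₁ L₂ L₃
      have h := hω (0, 0, L₁) (0, 0, L₂) (0, 0, L₃)
      simp [br, Om, hα0l, hαl0, hβ0r, hβ0l] at h
      have e := LinearMap.congr_fun (hεskew L₁ L₃) L₂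
      simp only [LinearMap.neg_apply] at e
      linarith
    exact ⟨⟨c1a, c1b, c1c⟩, c2, c3, c4, c5⟩
  · rintro ⟨⟨c1a, c1b, c1c⟩, c2, c3, c4, c5⟩
    have jac3 : ∀ X Y Z : a, ⁅⁅X,Y⁆,Z⁆ + ⁅⁅Y,Z⁆,X⁆ + ⁅⁅Z,X⁆,Y⁆ = 0 := fun X Y Z => by
      linear_combination (norm := module) - lie_jacobi X Y Z - lie_skew ⁅X,Y⁆ Z -
        lie_skew ⁅Y,Z⁆ X - lie_skew ⁅Z,X⁆ Y
    constructor
    · rintro ⟨Z₁, A₁, L₁⟩ ⟨Z₂, A₂, L₂⟩ ⟨Z₃, A₃, L₃⟩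
      refine Prod.ext ?_ (Prod.ext ?_ ?_)
      · -- l*-component of the Jacobi identity
        simp only [br, Prod.mk_add_mk, map_zero, LinearMap.zero_apply, add_zero, zero_add,
          Prod.fst_zero, hα0l]
        ext L₄
        have s2a := LinearMap.congr_fun (c2 L₃ A₁ A₂) L₄
        have s2b := LinearMap.congr_fun (c2 L₁ A₂ A₃) L₄
        have s2c := LinearMap.congr_fun (c2 L₂ A₃ A₁) L₄
        have s3a := LinearMap.congr_fun (c3 L₁ L₂ A₃) L₄
        have s3b := LinearMap.congr_fun (c3 L₂ L₃ A₁) L₄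
        have s3c := LinearMap.congr_fun (c3 L₃ L₁ A₂) L₄
        have s4 := LinearMap.congr_fun (c4 L₁ L₂ L₃) L₄
        have sγ : γ L₂ (αf L₃ L₁) L₄ = -(γ L₂ (αf L₁ L₃) L₄) := by
          rw [hαskew L₁ L₃]; simp
        have d1 : ωa (ξ L₄ ⁅A₁, A₂⁆) A₃ = ωa ⁅ξ L₄ A₁, A₂⁆ A₃ + ωa ⁅A₁, ξ L₄ A₂⁆ A₃ := by
          rw [c1a]; simp
        have d2 : ωa (ξ L₄ ⁅A₂, A₃⁆) A₁ = ωa ⁅ξ L₄ A₂, A₃⁆ A₁ + ωa ⁅A₂, ξ L₄ A₃⁆ A₁ := by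
          rw [c1a]; simp
        have d3 : ωa (ξ L₄ ⁅A₃, A₁⁆) A₂ = ωa ⁅ξ L₄ A₃, A₁⁆ A₂ + ωa ⁅A₃, ξ L₄ A₁⁆ A₂ := by
          rw [c1a]; simp
        have f1 : ωa ⁅A₃, ξ L₄ A₁⁆ A₂ = -(ωa ⁅ξ L₄ A₁, A₃⁆ A₂) := by
          rw [← lie_skew A₃ (ξ L₄ A₁), map_neg, LinearMap.neg_apply]
        have f2 : ωa ⁅A₁, ξ L₄ A₂⁆ A₃ = -(ωa ⁅ξ L₄ A₂, A₁⁆ A₃) := by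
          rw [← lie_skew A₁ (ξ L₄ A₂), map_neg, LinearMap.neg_apply]
        have f3 : ωa ⁅A₂, ξ L₄ A₃⁆ A₁ = -(ωa ⁅ξ L₄ A₃, A₂⁆ A₁) := by
          rw [← lie_skew A₂ (ξ L₄ A₃), map_neg, LinearMap.neg_apply]
        simp only [LinearMap.add_apply, LinearMap.sub_apply, LinearMap.zero_apply,
          LinearMap.neg_apply, hbeta, map_add, map_sub, map_neg] at s2a s2b s2c s3a s3b s3c s4 ⊢
        linarith [s2a, s2b, s2c, s3a, s3b, s3c, s4, sγ, d1, d2, d3, f1, f2, f3,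
          hclosed (ξ L₄ A₁) A₂ A₃, hclosed (ξ L₄ A₂) A₃ A₁, hclosed (ξ L₄ A₃) A₁ A₂,
          hskew (ξ L₄ (ξ L₃ A₂)) A₁, hskew (ξ L₄ (ξ L₁ A₃)) A₂, hskew (ξ L₄ (ξ L₂ A₁)) A₃,
          hskew (ξ L₃ A₂) (ξ L₄ A₁), hskew (ξ L₁ A₃) (ξ L₄ A₂), hskew (ξ L₂ A₁) (ξ L₄ A₃),
          hskew (ξ L₄ (ξ L₃ A₁)) A₂, hskew (ξ L₄ (ξ L₁ A₂)) A₃, hskew (ξ L₄ (ξ L₂ A₃)) A₁,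
          hskew (ξ L₃ A₁) (ξ L₄ A₂), hskew (ξ L₁ A₂) (ξ L₄ A₃), hskew (ξ L₂ A₃) (ξ L₄ A₁)]
      · -- a-component of the Jacobi identity
        simp only [br, Prod.mk_add_mk, map_zero, LinearMap.zero_apply, add_zero, zero_add,
          Prod.snd_zero, Prod.fst_zero, hα0l, map_add, map_sub, add_lie, sub_lie]
        have e' : ξ L₂ (αf L₃ L₁) = - ξ L₂ (αf L₁ L₃) := by rw [hαskew L₁ L₃]; simp
        linear_combination (norm := module) jac3 A₁ A₂ A₃
          - c1a L₃ A₁ A₂ - c1a L₁ A₂ A₃ - c1a L₂ A₃ A₁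
          + lie_skew A₁ (ξ L₃ A₂) + lie_skew A₂ (ξ L₁ A₃) + lie_skew A₃ (ξ L₂ A₁)
          - c1b L₁ L₂ A₃ - c1b L₂ L₃ A₁ - c1b L₃ L₁ A₂
          - c1c L₁ L₂ L₃ - e'
      · simp [br]
    · rintro ⟨Z₁, A₁, L₁⟩ ⟨Z₂, A₂, L₂⟩ ⟨Z₃, A₃, L₃⟩
      simp only [Om, br, map_zero, LinearMap.add_apply, LinearMap.sub_apply,
        LinearMap.zero_apply, hbeta, map_add, map_sub, add_zero, zero_add, sub_zero]
      have se := LinearMap.congr_fun (hεskew L₁ L₃) L₂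
      simp only [LinearMap.neg_apply] at se
      linarith [c5 L₁ L₂ L₃, se, hα L₁ L₂ A₃, hα L₁ L₃ A₂, hα L₂ L₃ A₁,
        hclosed A₁ A₂ A₃, hskew A₁ (ξ L₃ A₂), hskew A₂ (ξ L₁ A₃), hskew A₁ (ξ L₂ A₃),
        hskew A₂ (ξ L₃ A₁), hskew A₃ (ξ L₁ A₂), hskew A₃ (ξ L₂ A₁)]



end Stmt6
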